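/- Under NN-vulnerability with uniform strengths, a d*-regular network g in which any two countries have at most k common neighbors, with k < d* − 1 and γ ≥ (d*+1)/(d*−k−1), has no vulnerable country, and moreover no country is vulnerable at g + jk for any non-link jk. -/

import Mathlib

/-!
A coalition centred at `j` that avoids `i` has at most `deg j + 1` members, one fewer when `i` is
an ally of `j`; the allies of `i` inside it are common allies of `i` and `j`, plus `j` itself
exactly when the two are allied. Either way `i` is safe as soon as `γ ≥ 1` and
`deg j ≤ γ (deg i - |N_i ∩ N_j|)` for every `j ≠ i`. Adding one link raises every degree and
every number of common allies by at most one, so both in `g` and in `g + uv` this follows from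
`d* + 1 ≤ γ (d* - k - 1)`.
-/

open Finset

/-- The allies (neighbors) of `i` in network `g`, as a `Finset`. -/
noncomputable def nbrs {V : Type*} [Fintype V] (g : SimpleGraph V) (i : V) : Finset V :=
  @Finset.filter _ (fun j => g.Adj i j) (Classical.decPred _) Finset.univ

/-- The network `g` with the alliance `jk` added. -/
def addE {V : Type*} (g : SimpleGraph V) (j k : V) : SimpleGraph V :=
  g ⊔ SimpleGraph.fromEdgeSet {s(j, k)}

/-- NN-vulnerability with uniform strengths `M C = |C|` and constant `γ`: country `i` is
NN-vulnerable at `g` if some aggressor `j` and coalition `C ⊆ {j} ∪ N_j(g)` with `j ∈ C`,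
`i ∉ C`, satisfies `|C| > γ · (1 + |N_i(g) \ C|)`. -/
def NNVul {V : Type*} [Fintype V] [DecidableEq V] (g : SimpleGraph V) (γ : ℝ) (i : V) :
    Prop :=
  ∃ (j : V) (C : Finset V),
    C ⊆ insert j (nbrs g j) ∧ j ∈ C ∧ i ∉ C ∧
    γ * (1 + ((nbrs g i) \ C).card) < (C.card : ℝ)

section Neighbors

variable {V : Type*} [Fintype V]

@[simp]
lemma mem_nbrs {g : SimpleGraph V} {i x : V} : x ∈ nbrs g i ↔ g.Adj i x := by
  simp [nbrs]

lemma nbrs_mono {g h : SimpleGraph V} (hgh : g ≤ h) (x : V) : nbrs g x ⊆ nbrs h x :=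
  fun _ hy => mem_nbrs.2 (hgh (mem_nbrs.1 hy))

end Neighbors

lemma Finset.inter_insert_subset {α : Type*} [DecidableEq α] (s t : Finset α) (a : α) :
    s ∩ insert a t ⊆ insert a (s ∩ t) := by
  rw [Finset.insert_inter]
  split_ifs
  · exact subset_rfl
  · exact subset_insert _ _

section AddEdge

variable {V : Type*} {g : SimpleGraph V} {u v : V}

lemma addE_comm (g : SimpleGraph V) (u v : V) : addE g u v = addE g v u :=
  congrArg (g ⊔ ·) (SimpleGraph.edge_comm u v)

lemma adj_addE_iff (huv : u ≠ v) {a b : V} :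
    (addE g u v).Adj a b ↔ g.Adj a b ∨ (a = u ∧ b = v) ∨ (a = v ∧ b = u) := by
  change (g ⊔ SimpleGraph.edge u v).Adj a b ↔ _
  rw [SimpleGraph.sup_adj, SimpleGraph.edge_adj]
  constructor
  · rintro (hab | ⟨hab, -⟩)
    · exact Or.inl hab
    · exact Or.inr hab
  · rintro (hab | ⟨rfl, rfl⟩ | ⟨rfl, rfl⟩)
    · exact Or.inl hab
    · exact Or.inr ⟨Or.inl ⟨rfl, rfl⟩, huv⟩
    · exact Or.inr ⟨Or.inr ⟨rfl, rfl⟩, huv.symm⟩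

variable [Fintype V]

lemma nbrs_addE_of_ne (huv : u ≠ v) {x : V} (hxu : x ≠ u) (hxv : x ≠ v) :
    nbrs (addE g u v) x = nbrs g x := by
  ext y
  simp only [mem_nbrs, adj_addE_iff huv]
  grind

variable [DecidableEq V]

lemma nbrs_addE_left (huv : u ≠ v) : nbrs (addE g u v) u = insert v (nbrs g u) := by
  ext x
  simp only [mem_nbrs, adj_addE_iff huv, mem_insert]
  grind

lemma exists_nbrs_addE_subset_insert (huv : u ≠ v) (x : V) :
    ∃ w, nbrs (addE g u v) x ⊆ insert w (nbrs g x) := by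
  by_cases hxu : x = u
  · subst hxu
    exact ⟨v, (nbrs_addE_left huv).subset⟩
  by_cases hxv : x = v
  · subst hxv
    rw [addE_comm]
    exact ⟨u, (nbrs_addE_left (Ne.symm huv)).subset⟩
  exact ⟨x, (nbrs_addE_of_ne huv hxu hxv).subset.trans (subset_insert _ _)⟩

lemma nbrs_addE_inter (huv : u ≠ v) :
    nbrs (addE g u v) u ∩ nbrs (addE g u v) v = nbrs g u ∩ nbrs g v := by
  rw [nbrs_addE_left huv, addE_comm, nbrs_addE_left (Ne.symm huv),
    insert_inter_of_notMem, inter_insert_of_notMem (by simp)]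
  simp [Ne.symm huv]

lemma card_nbrs_addE_inter_le (huv : u ≠ v) {a b : V} (hab : a ≠ b) :
    (nbrs (addE g u v) a ∩ nbrs (addE g u v) b).card ≤ (nbrs g a ∩ nbrs g b).card + 1 := by
  have off_edge : ∀ a b, a ≠ u → a ≠ v →
      (nbrs (addE g u v) a ∩ nbrs (addE g u v) b).card ≤ (nbrs g a ∩ nbrs g b).card + 1 := by
    intro a b hau hav
    obtain ⟨w, hw⟩ := exists_nbrs_addE_subset_insert (g := g) huv b
    rw [nbrs_addE_of_ne huv hau hav]
    calc _ ≤ (insert w (nbrs g a ∩ nbrs g b)).card :=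
          card_le_card ((inter_subset_inter_left hw).trans (inter_insert_subset _ _ _))
      _ ≤ _ := card_insert_le _ _
  by_cases ha : a = u ∨ a = v
  · by_cases hb : b = u ∨ b = v
    · obtain ⟨rfl, rfl⟩ | ⟨rfl, rfl⟩ : a = u ∧ b = v ∨ a = v ∧ b = u := by grind
      · rw [nbrs_addE_inter huv]; omega
      · rw [inter_comm, nbrs_addE_inter huv, inter_comm]; omega
    · rw [inter_comm, inter_comm (nbrs g a)]
      exact off_edge b a (by tauto) (by tauto)
  · exact off_edge a b (by tauto) (by tauto)

end AddEdge

section Coalition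

variable {V : Type*} [Fintype V] [DecidableEq V] {h : SimpleGraph V} {i j : V} {C : Finset V}

lemma card_nbrs_inter_le_of_subset_insert (hC : C ⊆ insert j (nbrs h j)) :
    (nbrs h i ∩ C).card ≤ (nbrs h i ∩ nbrs h j).card + 1 :=
  calc _ ≤ (insert j (nbrs h i ∩ nbrs h j)).card :=
        card_le_card ((inter_subset_inter_left hC).trans (inter_insert_subset _ _ _))
    _ ≤ _ := card_insert_le _ _

lemma card_add_card_nbrs_inter_le (hC : C ⊆ insert j (nbrs h j)) (hiC : i ∉ C) :
    C.card + (nbrs h i ∩ C).card ≤ (nbrs h j).card + 1 + (nbrs h i ∩ nbrs h j).card := by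
  have hball : (insert j (nbrs h j)).card = (nbrs h j).card + 1 :=
    card_insert_of_notMem (by simp)
  have hinter := card_nbrs_inter_le_of_subset_insert (i := i) hC
  by_cases hij : h.Adj i j
  · have hCi : C.card ≤ (nbrs h j).card := by
      have hsub : C ⊆ (insert j (nbrs h j)).erase i := subset_erase.2 ⟨hC, hiC⟩
      have hmem : i ∈ insert j (nbrs h j) := mem_insert_of_mem (mem_nbrs.2 hij.symm)
      have := card_le_card hsub
      rw [card_erase_of_mem hmem, hball] at this
      omega
    omega
  · have hCj : C.card ≤ (nbrs h j).card + 1 := hball ▸ card_le_card hC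
    have hsub : nbrs h i ∩ C ⊆ nbrs h i ∩ nbrs h j := by
      intro x hx
      rw [mem_inter] at hx ⊢
      obtain rfl | hxj := mem_insert.1 (hC hx.2)
      · exact absurd (mem_nbrs.1 hx.1) hij
      · exact ⟨hx.1, hxj⟩
    have := card_le_card hsub
    omega

lemma not_NNVul_of_card_nbrs_le {γ : ℝ} (hγ : 1 ≤ γ)
    (hbound : ∀ j, j ≠ i →
      ((nbrs h j).card : ℝ) ≤ γ * ((nbrs h i).card - (nbrs h i ∩ nbrs h j).card)) :
    ¬ NNVul h γ i := by
  rintro ⟨j, C, hC, hjC, hiC, hlt⟩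
  have hji : j ≠ i := by rintro rfl; exact hiC hjC
  have hsplit : ((nbrs h i \ C).card : ℝ) = (nbrs h i).card - (nbrs h i ∩ C).card := by
    rw [eq_sub_iff_add_eq]
    exact_mod_cast card_sdiff_add_card_inter (nbrs h i) C
  rw [hsplit] at hlt
  have hinter : ((nbrs h i ∩ C).card : ℝ) ≤ (nbrs h i ∩ nbrs h j).card + 1 := by
    exact_mod_cast card_nbrs_inter_le_of_subset_insert hC
  have hsum : (C.card : ℝ) + (nbrs h i ∩ C).card ≤
      (nbrs h j).card + 1 + (nbrs h i ∩ nbrs h j).card := by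
    exact_mod_cast card_add_card_nbrs_inter_le hC hiC
  have hγc := mul_le_mul_of_nonneg_right hγ (sub_nonneg.2 hinter)
  linarith [hbound j hji]

end Coalition

lemma not_NNVul_of_card_nbrs_bounds {V : Type*} [Fintype V] [DecidableEq V]
    {h : SimpleGraph V} {D c : ℕ} {γ : ℝ} (hcD : c < D)
    (hγ : ((D : ℝ) + 1) / ((D : ℝ) - c) ≤ γ)
    (hlo : ∀ v, D ≤ (nbrs h v).card) (hhi : ∀ v, (nbrs h v).card ≤ D + 1)
    (hcommon : ∀ a b, a ≠ b → (nbrs h a ∩ nbrs h b).card ≤ c) (i : V) :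
    ¬ NNVul h γ i := by
  have hpos : (0 : ℝ) < D - c := sub_pos.2 (by exact_mod_cast hcD)
  have hγ' : (D : ℝ) + 1 ≤ γ * (D - c) := (div_le_iff₀ hpos).1 hγ
  have hγ1 : 1 ≤ γ := by
    by_contra! hlt
    nlinarith
  refine not_NNVul_of_card_nbrs_le hγ1 fun j hji => ?_
  have hdeg_j : ((nbrs h j).card : ℝ) ≤ D + 1 := by exact_mod_cast hhi j
  have hdeg_i : (D : ℝ) - c ≤ (nbrs h i).card - (nbrs h i ∩ nbrs h j).card := by
    have hi : (D : ℝ) ≤ (nbrs h i).card := by exact_mod_cast hlo i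
    have hij : ((nbrs h i ∩ nbrs h j).card : ℝ) ≤ c := by exact_mod_cast hcommon i j hji.symm
    linarith
  calc ((nbrs h j).card : ℝ) ≤ γ * (D - c) := hdeg_j.trans hγ'
    _ ≤ _ := mul_le_mul_of_nonneg_left hdeg_i (by linarith)

theorem regular_network_not_vulnerable_general {n dstar k : ℕ} (γ : ℝ)
    (hk : k + 1 < dstar)
    (hγ : ((dstar : ℝ) + 1) / ((dstar : ℝ) - (k : ℝ) - 1) ≤ γ)
    (g : SimpleGraph (Fin n))
    (hreg : ∀ v : Fin n, (nbrs g v).card = dstar)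
    (hcommon : ∀ u v : Fin n, u ≠ v → ((nbrs g u) ∩ (nbrs g v)).card ≤ k) :
    (∀ i : Fin n, ¬ NNVul g γ i) ∧
    (∀ u v : Fin n, u ≠ v → ¬ g.Adj u v → ∀ i : Fin n, ¬ NNVul (addE g u v) γ i) := by
  have hγ' : ((dstar : ℝ) + 1) / ((dstar : ℝ) - ((k + 1 : ℕ) : ℝ)) ≤ γ := by
    rwa [Nat.cast_succ, ← sub_sub]
  refine ⟨not_NNVul_of_card_nbrs_bounds hk hγ' (fun v => (hreg v).ge)
      (fun v => (hreg v).le.trans (Nat.le_succ _))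
      (fun a b hab => (hcommon a b hab).trans (Nat.le_succ _)), fun u v huv _ => ?_⟩
  refine not_NNVul_of_card_nbrs_bounds hk hγ' (fun x => ?_) (fun x => ?_) (fun a b hab => ?_)
  · exact hreg x ▸ card_le_card (nbrs_mono le_sup_left x)
  · obtain ⟨w, hw⟩ := exists_nbrs_addE_subset_insert (g := g) huv x
    exact hreg x ▸ (card_le_card hw).trans (card_insert_le _ _)
  · exact (card_nbrs_addE_inter_le huv hab).trans (Nat.succ_le_succ (hcommon a b hab))

/-- a `d*`-regular network in which any two countries have at most
`k < d* - 1` common allies, with `γ ≥ (d*+1)/(d*-k-1)`, has no NN-vulnerable country,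
nor does any network obtained by adding one link. -/
theorem regular_network_not_vulnerable {n dstar k : ℕ} (γ : ℝ)
    (hd : 2 ≤ dstar) (hk : k + 1 < dstar)
    (hγ : ((dstar : ℝ) + 1) / ((dstar : ℝ) - (k : ℝ) - 1) ≤ γ)
    (g : SimpleGraph (Fin n))
    (hreg : ∀ v : Fin n, (nbrs g v).card = dstar)
    (hcommon : ∀ u v : Fin n, u ≠ v → ((nbrs g u) ∩ (nbrs g v)).card ≤ k) :
    (∀ i : Fin n, ¬ NNVul g γ i) ∧
    (∀ u v : Fin n, u ≠ v → ¬ g.Adj u v → ∀ i : Fin n, ¬ NNVul (addE g u v) γ i) :=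
  regular_network_not_vulnerable_general γ hk hγ g hreg hcommon
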